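/- arXiv:1307.1447 — 2 statements merged into one kernel-verified Lean document; each statement's English description precedes it below -/
import Mathlib

section
/- Let A be a sequence of n real numbers with interval partition I_0,...,I_{λ-1}, let x < 0 be real, p ∈ {0,...,n-1} with p in interval I_k, and B = ins(A,p,x). Define dec(p) = 0 if p = α_k, and dec(p) = min(-x, MS(A,p-1)) if p > α_k; and for p ≤ i < β_k, dec(i+1) = min(dec(i), MS(A,i)). Then for every i ∈ [p, β_k], MS(B, i+1) = MS(A,i) − dec(i). -/
noncomputable section

/-- Sum of the contiguous subsequence A[j..i]. -/
def seg (A : ℕ → ℝ) (j i : ℕ) : ℝ := ∑ t ∈ Finset.Icc j i, A t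

/-- Maximal sum at element i: max over j ≤ i of sum A[j..i]. -/
def MS (A : ℕ → ℝ) (i : ℕ) : ℝ :=
  (Finset.range (i+1)).sup' (Finset.nonempty_range_iff.mpr (Nat.succ_ne_zero i))
    (fun j => seg A j i)

/-- Maximal sum of a contiguous, possibly empty, subsequence of A[0..n-1]. -/
def maxsum (A : ℕ → ℝ) (n : ℕ) : ℝ :=
  Finset.fold max 0 (fun q => seg A q.1 q.2)
    (Finset.filter (fun q => q.1 ≤ q.2) ((Finset.range n) ×ˢ (Finset.range n)))

/-- Insertion of x between A[p-1] and A[p]. -/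
def ins (A : ℕ → ℝ) (p : ℕ) (x : ℝ) : ℕ → ℝ :=
  fun i => if i < p then A i else if i = p then x else A (i - 1)

/-- Sum of the circular subsequence A⟨j..i⟩ of a sequence of length n. -/
def circseg (A : ℕ → ℝ) (n j i : ℕ) : ℝ :=
  if j ≤ i then seg A j i else seg A j (n-1) + seg A 0 i

/-- Maximal circular sum at element i. -/
def MCS (A : ℕ → ℝ) (n i : ℕ) : ℝ :=
  if h : 0 < n then
    (Finset.range n).sup' (Finset.nonempty_range_iff.mpr h.ne')
      (fun j => circseg A n j i)
  else 0

/-- Maximal circular sum of a possibly empty circular subsequence. -/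
def mcs (A : ℕ → ℝ) (n : ℕ) : ℝ :=
  Finset.fold max 0 (fun q => circseg A n q.1 q.2)
    ((Finset.range n) ×ˢ (Finset.range n))

/-- OMCS A n i = i ⊖ j*, where j* is the largest j with sum A⟨(i⊖j)..i⟩ = MCS A n i. -/
def OMCS (A : ℕ → ℝ) (n i : ℕ) : ℕ :=
  (i + n - ((Finset.filter
      (fun j => circseg A n ((i + n - j) % n) i = MCS A n i)
      (Finset.range n)).max.getD 0)) % n

/-- h belongs to the circular range from a to b (indices mod n). -/
def inCircRange (n a b h : ℕ) : Prop :=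
  (a ≤ b ∧ a ≤ h ∧ h ≤ b) ∨ (b < a ∧ ((a ≤ h ∧ h < n) ∨ h ≤ b))

/-- The (noncircular) interval partition of A into L intervals A[α i .. β i]. -/
def IntervalPartition (A : ℕ → ℝ) (n L : ℕ) (α β : ℕ → ℕ) : Prop :=
  0 < L ∧ 0 < n ∧ α 0 = 0 ∧ β (L-1) = n-1 ∧
  (∀ i, i + 1 < L → α (i+1) = β i + 1) ∧
  (∀ i, i < L → α i ≤ β i) ∧
  (∀ i, i < L → ∀ j, α i ≤ j → j ≤ β i →
     (j ≠ β i → 0 ≤ MS A j) ∧ (j = β i → i < L - 1 → MS A j < 0))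

lemma MS_zero' (A : ℕ → ℝ) : MS A 0 = A 0 := by
  unfold MS
  simp [seg]

lemma MS_succ' (A : ℕ → ℝ) (i : ℕ) : MS A (i+1) = max (MS A i) 0 + A (i+1) := by
  unfold MS
  rw [Finset.sup'_congr _ (Finset.range_add_one (n := i+1)) (fun _ _ => rfl),
    Finset.sup'_insert]
  have h1 : seg A (i+1) (i+1) = A (i+1) := by
    simp [seg]
  have h2 : ∀ j ∈ Finset.range (i+1), seg A j (i+1) = seg A j i + A (i+1) := by
    intro j hj
    simp only [Finset.mem_range] at hj
    exact Finset.sum_Icc_succ_top (by omega) A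
  rw [h1, Finset.sup'_congr _ rfl h2, ← Finset.sup'_add, ← max_add_add_right, zero_add]
  exact sup_comm _ _
  exact Finset.nonempty_range_iff.mpr (Nat.succ_ne_zero i)

lemma MS_congr' (A B : ℕ → ℝ) (i : ℕ) (h : ∀ t, t ≤ i → A t = B t) : MS A i = MS B i := by
  unfold MS
  apply Finset.sup'_congr _ rfl
  intro j hj
  unfold seg
  apply Finset.sum_congr rfl
  intro t ht
  simp only [Finset.mem_Icc] at ht
  exact h t ht.2


theorem stmt7 (A : ℕ → ℝ) (n L : ℕ) (α β : ℕ → ℕ)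
    (hip : IntervalPartition A n L α β)
    (x : ℝ) (hx : x < 0) (p k : ℕ) (hp : p < n) (hk : k < L)
    (hpk : α k ≤ p ∧ p ≤ β k)
    (dec : ℕ → ℝ)
    (hdec0 : dec p = if p = α k then 0 else min (-x) (MS A (p-1)))
    (hdecs : ∀ i, p ≤ i → i < β k → dec (i+1) = min (dec i) (MS A i)) :
    ∀ i, p ≤ i → i ≤ β k → MS (ins A p x) (i+1) = MS A i - dec i := by
  obtain ⟨hL, hn, hα0, hβL, hαsucc, hαβle, hcond⟩ := hip
  have hBlt : ∀ t, t < p → ins A p x t = A t := by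
    intro t ht; simp [ins, ht]
  have hBp : ins A p x p = x := by simp [ins]
  have hBgt : ∀ t, p < t → ins A p x t = A (t-1) := by
    intro t ht
    simp [ins, Nat.not_lt.mpr ht.le, (Nat.ne_of_gt ht)]
  have hnonneg : ∀ j, α k ≤ j → j < β k → 0 ≤ MS A j := fun j h1 h2 =>
    (hcond k hk j h1 h2.le).1 (by omega)
  have hbase : MS (ins A p x) (p+1) = MS A p - dec p := by
    rcases Nat.eq_zero_or_pos p with h0 | h0
    · subst h0
      have hα : (0:ℕ) = α k := by omega
      have h1 : ins A 0 x (0+1) = A 0 := hBgt 1 one_pos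
      rw [MS_succ', MS_zero', MS_zero', hBp, h1, hdec0, if_pos hα,
        max_eq_right hx.le]
      ring
    · obtain ⟨q, rfl⟩ := Nat.exists_eq_succ_of_ne_zero h0.ne'
      have e1 : MS (ins A (q+1) x) q = MS A q :=
        MS_congr' _ _ _ (fun t ht => hBlt t (by omega))
      have e2 : MS (ins A (q+1) x) (q+1) = max (MS A q) 0 + x := by
        rw [MS_succ', e1, hBp]
      have hb : ins A (q+1) x (q+1+1) = A (q+1) := hBgt (q+2) (by omega)
      have e3 : MS (ins A (q+1) x) (q+1+1)
          = max (MS (ins A (q+1) x) (q+1)) 0 + A (q+1) := by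
        rw [MS_succ', hb]
      have e4 : MS A (q+1) = max (MS A q) 0 + A (q+1) := MS_succ' A q
      by_cases hpα : q+1 = α k
      · have hk1 : k ≠ 0 := by
          intro h; subst h; omega
        have hks : α k = β (k-1) + 1 := by
          have h := hαsucc (k-1) (by omega)
          rwa [show k-1+1 = k by omega] at h
        have hq : q = β (k-1) := by omega
        have hneg : MS A q < 0 := by
          rw [hq]
          exact (hcond (k-1) (by omega) (β (k-1)) (hαβle (k-1) (by omega))
            le_rfl).2 rfl (by omega)
        rw [hdec0, if_pos hpα, sub_zero, e3, e2, e4, max_eq_right hneg.le,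
          zero_add, max_eq_right hx.le]
      · have hnn : 0 ≤ MS A q := hnonneg q (by omega) (by omega)
        rw [hdec0, if_neg hpα, e3, e2, e4, max_eq_left hnn]
        simp only [Nat.succ_sub_one]
        rcases le_total (-x) (MS A q) with h | h
        · rw [min_eq_left h, max_eq_left (by linarith)]; ring
        · rw [min_eq_right h, max_eq_right (by linarith)]; ring
  intro i hpi
  induction i, hpi using Nat.le_induction with
  | base => intro _; exact hbase
  | succ i hpi ih =>
    intro hle
    have hiβ : i < β k := by omega
    have ih' := ih (by omega)
    have hnn : 0 ≤ MS A i := hnonneg i (le_trans hpk.1 hpi) hiβ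
    have hb : ins A p x (i+1+1) = A (i+1) := hBgt (i+2) (by omega)
    rw [MS_succ', hb, ih', MS_succ', max_eq_left hnn, hdecs i hpi hiβ]
    rcases le_total (dec i) (MS A i) with h | h
    · rw [min_eq_left h, max_eq_left (by linarith)]; ring
    · rw [min_eq_right h, max_eq_right (by linarith)]; ring
end
end

section
/- Let A be a sequence of n ≥ 1 real numbers with both positive and negative elements, MCS(A,i) ≥ 0 for all i, and assume additionally either OMCS(A,n-1) ≠ OMCS(A,0) or OMCS(A,i) = 0 for all i (no interval wraps around). Partition A into intervals by the equivalence OMCS(A,i) = OMCS(A,j). Then for every interval I = A[α..β] of this partition and every j ∈ [α,β], OMCS(A,j) = β ⊕ 1 (mod n); moreover, every prefix A[α..j] of I has nonnegative sum. -/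
noncomputable section

/-!
Write `ω i` for `OMCS A n i`, the start of the longest maximal circular segment ending at `i`.
If that segment is not the whole circle, appending `A (i ⊕ 1)` to it gives the longest maximal
segment ending at `i ⊕ 1` (Kadane's recurrence, which needs `MCS A n i ≥ 0`), so `ω (i ⊕ 1) = ω i`.
Hence wherever `ω` changes, from `i` to `i ⊕ 1`, the whole circle starting at `i ⊕ 1` is maximal
at `i`, i.e. `ω i = i ⊕ 1`. At the right end `β` of an interval this gives `ω = β ⊕ 1` on it. Just
before its left end `α` it makes the circle from `α` around to `α ⊖ 1` a maximal segment, and a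
maximal segment has no negative prefix: the complementary suffix would be a better segment.
-/

/-- `circSub n i x` is `i ⊖ x`: subtraction modulo `n`, for `x ≤ i + n`. -/
def circSub (n i x : ℕ) : ℕ := (i + n - x) % n

section CircSub

variable {n i x : ℕ}

lemma circSub_lt (hn : 0 < n) : circSub n i x < n := Nat.mod_lt _ hn

lemma circSub_eq_ite (hi : i < n) (hx : x < n) :
    circSub n i x = if x ≤ i then i - x else i + n - x := by
  unfold circSub
  split_ifs
  · rw [show i + n - x = i - x + n by omega, Nat.add_mod_right, Nat.mod_eq_of_lt (by omega)]
  · exact Nat.mod_eq_of_lt (by omega)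

lemma circSub_self (x : ℕ) : circSub n x x = 0 := by
  simp [circSub]

lemma circSub_circSub (hi : i < n) (hx : x < n) : circSub n i (circSub n i x) = x := by
  have hn : 0 < n := by omega
  rw [circSub_eq_ite hi (circSub_lt hn), circSub_eq_ite hi hx]
  split_ifs <;> omega

lemma succ_mod_circSub (hi : i < n) (hx : x < n) (hne : x ≠ (i + 1) % n) :
    circSub n ((i + 1) % n) x = circSub n i x + 1 := by
  have hn : 0 < n := by omega
  rcases Nat.lt_or_ge (i + 1) n with h | h
  · rw [Nat.mod_eq_of_lt h] at hne ⊢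
    rw [circSub_eq_ite h hx, circSub_eq_ite hi hx]
    split_ifs <;> omega
  · rw [show i + 1 = n by omega, Nat.mod_self] at hne ⊢
    rw [circSub_eq_ite hn hx, circSub_eq_ite hi hx]
    split_ifs <;> omega

end CircSub

section CircularSegments

variable (A : ℕ → ℝ) {n i j u v : ℕ}

lemma seg_eq_sub (h : j ≤ i + 1) :
    seg A j i = ∑ t ∈ Finset.range (i + 1), A t - ∑ t ∈ Finset.range j, A t := by
  rw [seg, ← Finset.Ico_add_one_right_eq_Icc, Finset.sum_Ico_eq_sub _ h]

lemma circseg_mod_eq_sub (hj : j ≤ n) (hi : i < n) :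
    circseg A n (j % n) i = ∑ t ∈ Finset.range (i + 1), A t - ∑ t ∈ Finset.range j, A t +
      if i < j then ∑ t ∈ Finset.range n, A t else 0 := by
  rcases hj.lt_or_eq with hj | rfl
  · rw [Nat.mod_eq_of_lt hj, circseg]
    split_ifs
    · omega
    · rw [seg_eq_sub A (by omega)]; ring
    · rw [seg_eq_sub A (by omega), seg_eq_sub A (by omega), Nat.sub_add_cancel (by omega)]
      simp only [Finset.range_zero, Finset.sum_empty]
      ring
    · omega
  · rw [Nat.mod_self, circseg, if_pos (Nat.zero_le _), if_pos hi, seg_eq_sub A (by omega)]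
    simp

lemma circseg_self (j : ℕ) : circseg A n j j = A j := by
  simp [circseg, seg]

lemma circseg_succ_right (hi : i < n) (hu : u < n) (hne : u ≠ (i + 1) % n) :
    circseg A n u ((i + 1) % n) = circseg A n u i + A ((i + 1) % n) := by
  have hn : 0 < n := by omega
  have hseg := fun k (hk : k < n) => Nat.mod_eq_of_lt hu ▸ circseg_mod_eq_sub A hu.le hk
  rcases Nat.lt_or_ge (i + 1) n with h | h
  · rw [Nat.mod_eq_of_lt h] at hne ⊢
    rw [hseg _ h, hseg _ hi, Finset.sum_range_succ _ (i + 1)]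
    split_ifs <;> first | omega | ring
  · rw [show i + 1 = n by omega, Nat.mod_self] at hne ⊢
    rw [hseg _ hn, hseg _ hi, show i + 1 = n by omega, Finset.sum_range_one]
    split_ifs <;> first | omega | ring

lemma circseg_add_circseg (hi : i < n) (hv : v < n) (hvi : v ≠ i) :
    circseg A n ((i + 1) % n) v + circseg A n ((v + 1) % n) i =
      circseg A n ((i + 1) % n) i := by
  rw [circseg_mod_eq_sub A hi hv, circseg_mod_eq_sub A hv hi, circseg_mod_eq_sub A hi hi]
  split_ifs <;> first | omega | ring

lemma circseg_le_MCS (hu : u < n) : circseg A n u i ≤ MCS A n i := by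
  rw [MCS, dif_pos (by omega)]
  exact Finset.le_sup' (fun j => circseg A n j i) (Finset.mem_range.mpr hu)

lemma exists_circseg_eq_MCS (hn : 0 < n) (i : ℕ) : ∃ u < n, circseg A n u i = MCS A n i := by
  rw [MCS, dif_pos hn]
  obtain ⟨u, hu, he⟩ := Finset.exists_mem_eq_sup' (Finset.nonempty_range_iff.mpr hn.ne')
    (fun j => circseg A n j i)
  exact ⟨u, Finset.mem_range.mp hu, he.symm⟩

/-- `circSub n i u + 1` is the length of `A⟨u..i⟩`. -/
def IsLongestMaxStart (A : ℕ → ℝ) (n i u : ℕ) : Prop :=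
  u < n ∧ circseg A n u i = MCS A n i ∧
    ∀ u' < n, circseg A n u' i = MCS A n i → circSub n i u' ≤ circSub n i u

lemma isLongestMaxStart_OMCS (hi : i < n) : IsLongestMaxStart A n i (OMCS A n i) := by
  have hn : 0 < n := by omega
  set s := (Finset.range n).filter (fun j => circseg A n (circSub n i j) i = MCS A n i)
  have mem_s : ∀ u < n, circseg A n u i = MCS A n i → circSub n i u ∈ s := fun u hu h => by
    simpa [s, circSub_circSub hi hu, circSub_lt hn] using h
  obtain ⟨u₀, hu₀, hmax₀⟩ := exists_circseg_eq_MCS A hn i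
  obtain ⟨J, hJ⟩ := Finset.max_of_nonempty ⟨_, mem_s u₀ hu₀ hmax₀⟩
  have hJs : J ∈ s := Finset.mem_of_max hJ
  simp only [s, Finset.mem_filter, Finset.mem_range] at hJs
  have hOMCS : OMCS A n i = circSub n i J := by
    change circSub n i (s.max.getD 0) = _
    rw [hJ]
    rfl
  refine ⟨hOMCS ▸ circSub_lt hn, hOMCS ▸ hJs.2, fun u hu h => ?_⟩
  rw [hOMCS, circSub_circSub hi hJs.1]
  exact Finset.le_max_of_eq (mem_s u hu h) hJ

lemma IsLongestMaxStart.OMCS_eq (hi : i < n) (h : IsLongestMaxStart A n i u) :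
    OMCS A n i = u := by
  obtain ⟨hω, hmaxω, hlongω⟩ := isLongestMaxStart_OMCS A hi
  obtain ⟨hu, hmax, hlong⟩ := h
  have hsub : circSub n i (OMCS A n i) = circSub n i u :=
    le_antisymm (hlong _ hω hmaxω) (hlongω u hu hmax)
  rw [← circSub_circSub hi hω, hsub, circSub_circSub hi hu]

lemma MCS_succ (hi : i < n) (h0 : 0 ≤ MCS A n i) (hne : OMCS A n i ≠ (i + 1) % n) :
    MCS A n ((i + 1) % n) = MCS A n i + A ((i + 1) % n) := by
  have hn : 0 < n := by omega
  obtain ⟨hω, hmaxω, -⟩ := isLongestMaxStart_OMCS A hi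
  apply le_antisymm
  · obtain ⟨u, hu, hmax⟩ := exists_circseg_eq_MCS A hn ((i + 1) % n)
    rw [← hmax]
    by_cases hu' : u = (i + 1) % n
    · rw [hu', circseg_self]
      linarith
    · rw [circseg_succ_right A hi hu hu']
      linarith [circseg_le_MCS A (i := i) hu]
  · rw [← hmaxω, ← circseg_succ_right A hi hω hne]
    exact circseg_le_MCS A hω

lemma OMCS_succ_of_ne (hi : i < n) (h0 : 0 ≤ MCS A n i) (hne : OMCS A n i ≠ (i + 1) % n) :
    OMCS A n ((i + 1) % n) = OMCS A n i := by
  have hn : 0 < n := by omega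
  obtain ⟨hω, hmaxω, hlongω⟩ := isLongestMaxStart_OMCS A hi
  refine IsLongestMaxStart.OMCS_eq A (Nat.mod_lt _ hn) ⟨hω, ?_, fun u hu hmax => ?_⟩
  · rw [circseg_succ_right A hi hω hne, hmaxω, MCS_succ A hi h0 hne]
  · by_cases hu' : u = (i + 1) % n
    · rw [hu', circSub_self]
      exact Nat.zero_le _
    · rw [circseg_succ_right A hi hu hu', MCS_succ A hi h0 hne, add_left_inj] at hmax
      rw [succ_mod_circSub hi hu hu', succ_mod_circSub hi hω hne]
      exact Nat.succ_le_succ (hlongω u hu hmax)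

lemma OMCS_eq_succ_of_ne (hi : i < n) (h0 : 0 ≤ MCS A n i)
    (hne : OMCS A n ((i + 1) % n) ≠ OMCS A n i) : OMCS A n i = (i + 1) % n := by
  by_contra h
  exact hne (OMCS_succ_of_ne A hi h0 h)

lemma circseg_OMCS_nonneg (hi : i < n) (h0 : 0 ≤ MCS A n i) (h : OMCS A n i = (i + 1) % n)
    (hv : v < n) : 0 ≤ circseg A n (OMCS A n i) v := by
  have hfull : circseg A n ((i + 1) % n) i = MCS A n i :=
    h ▸ (isLongestMaxStart_OMCS A hi).2.1
  rw [h]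
  by_cases hvi : v = i
  · rw [hvi, hfull]
    exact h0
  · have hsplit := circseg_add_circseg A hi hv hvi
    linarith [circseg_le_MCS A (i := i) (Nat.mod_lt (v + 1) (show 0 < n by omega))]

end CircularSegments

theorem stmt15_general (A : ℕ → ℝ) (n : ℕ)
    (htype3 : ∀ i, i < n → 0 ≤ MCS A n i)
    (hnowrap : OMCS A n (n-1) ≠ OMCS A n 0 ∨ ∀ i, i < n → OMCS A n i = 0)
    (a b : ℕ) (hb : b < n)
    (hconst : ∀ j, a ≤ j → j ≤ b → OMCS A n j = OMCS A n a)
    (hmaxl : a = 0 ∨ OMCS A n (a-1) ≠ OMCS A n a)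
    (hmaxr : b = n - 1 ∨ OMCS A n (b+1) ≠ OMCS A n b) :
    ∀ j, a ≤ j → j ≤ b → OMCS A n j = (b + 1) % n ∧ 0 ≤ seg A a j := by
  intro j hja hjb
  have hn : 0 < n := by omega
  have hlast_succ : (n - 1 + 1) % n = 0 := by rw [Nat.sub_add_cancel hn, Nat.mod_self]
  have hlast : OMCS A n (n - 1) = 0 := by
    rcases hnowrap with h | h
    · have hω := OMCS_eq_succ_of_ne A (i := n - 1) (by omega) (htype3 _ (by omega))
        (by rw [hlast_succ]; exact h.symm)
      rwa [hlast_succ] at hω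
    · exact h _ (by omega)
  have hend : OMCS A n b = (b + 1) % n := by
    rcases eq_or_ne b (n - 1) with rfl | hbn
    · rw [hlast, hlast_succ]
    · refine OMCS_eq_succ_of_ne A hb (htype3 b hb) ?_
      rw [Nat.mod_eq_of_lt (by omega)]
      exact hmaxr.resolve_left hbn
  have hstart : ∃ i < n, OMCS A n i = (i + 1) % n ∧ OMCS A n i = a := by
    rcases Nat.eq_zero_or_pos a with rfl | ha
    · exact ⟨n - 1, by omega, hlast.trans hlast_succ.symm, hlast⟩
    · have hsucc : (a - 1 + 1) % n = a := by
        rw [Nat.sub_add_cancel ha, Nat.mod_eq_of_lt (by omega)]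
      have hω : OMCS A n (a - 1) = (a - 1 + 1) % n := by
        refine OMCS_eq_succ_of_ne A (by omega) (htype3 _ (by omega)) ?_
        rw [hsucc]
        exact (hmaxl.resolve_left ha.ne').symm
      exact ⟨a - 1, by omega, hω, hω.trans hsucc⟩
  obtain ⟨i, hi, hsucc, hia⟩ := hstart
  refine ⟨(hconst j hja hjb).trans ((hconst b (hja.trans hjb) le_rfl).symm.trans hend), ?_⟩
  have hnonneg := circseg_OMCS_nonneg A hi (htype3 i hi) hsucc (by omega : j < n)
  rwa [hia, circseg, if_pos hja] at hnonneg

theorem stmt15 (A : ℕ → ℝ) (n : ℕ) (hn : 1 ≤ n)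
    (hpos : ∃ i, i < n ∧ 0 < A i) (hneg : ∃ i, i < n ∧ A i < 0)
    (htype3 : ∀ i, i < n → 0 ≤ MCS A n i)
    (hnowrap : OMCS A n (n-1) ≠ OMCS A n 0 ∨ ∀ i, i < n → OMCS A n i = 0)
    (a b : ℕ) (hab : a ≤ b) (hb : b < n)
    (hconst : ∀ j, a ≤ j → j ≤ b → OMCS A n j = OMCS A n a)
    (hmaxl : a = 0 ∨ OMCS A n (a-1) ≠ OMCS A n a)
    (hmaxr : b = n - 1 ∨ OMCS A n (b+1) ≠ OMCS A n b) :
    ∀ j, a ≤ j → j ≤ b → OMCS A n j = (b + 1) % n ∧ 0 ≤ seg A a j :=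
  stmt15_general A n htype3 hnowrap a b hb hconst hmaxl hmaxr
end
end
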